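/- Let α ≤ 0 and τ ∈ ℝ, and set ᾱ = √(1+α²). Then the survival function of the univariate extended skew-normal distribution satisfies lim_{x→∞} [1 − Φ_{α,τ}(x)] · Φ(τ/ᾱ)·(ᾱ²x + ατ) / (φ(x)·Φ(αx+τ)) = 1; that is, 1 − Φ_{α,τ}(x) is asymptotically equivalent to φ(x)Φ(αx+τ)/(Φ(τ/ᾱ)(ᾱ²x+ατ)) as x → ∞. -/

import Mathlib

open MeasureTheory Filter Matrix Set Real

/-- standard normal density -/
noncomputable def stdPdf (t : ℝ) : ℝ := Real.exp (-t^2/2) / Real.sqrt (2*Real.pi)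

/-- standard normal cdf Φ -/
noncomputable def stdCdf (x : ℝ) : ℝ := ∫ t in Set.Iic x, stdPdf t


lemma stdPdf_pos (t : ℝ) : 0 < stdPdf t := by
  unfold stdPdf
  positivity

lemma continuous_stdPdf : Continuous stdPdf := by
  unfold stdPdf
  fun_prop

lemma integrable_stdPdf : Integrable stdPdf := by
  have h : Integrable (fun t : ℝ => Real.exp (-(1/2) * t^2)) := integrable_exp_neg_mul_sq (by norm_num)
  have := h.div_const (Real.sqrt (2*Real.pi))
  convert this using 2 with t
  unfold stdPdf
  ring_nf

lemma integral_stdPdf : ∫ t, stdPdf t = 1 := by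
  have h : ∫ t : ℝ, Real.exp (-(1/2) * t^2) = Real.sqrt (Real.pi / (1/2)) := integral_gaussian (1/2)
  unfold stdPdf
  rw [integral_div]
  have h2 : (fun t : ℝ => Real.exp (-t^2/2)) = fun t : ℝ => Real.exp (-(1/2) * t^2) := by
    funext t; ring_nf
  rw [h2, h]
  rw [div_eq_one_iff_eq (by positivity)]
  congr 1
  ring

lemma stdPdf_neg (t : ℝ) : stdPdf (-t) = stdPdf t := by unfold stdPdf; rw [neg_sq]

/-- general: derivative of Iic-integral of a continuous integrable function -/
lemma hasDerivAt_integral_Iic {f : ℝ → ℝ} (hc : Continuous f) (hi : Integrable f) (x : ℝ) :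
    HasDerivAt (fun y => ∫ t in Iic y, f t) (f x) x := by
  have key : ∀ y : ℝ, ∫ t in Iic y, f t = (∫ t in Iic (0:ℝ), f t) + ∫ t in (0:ℝ)..y, f t := by
    intro y
    rw [← intervalIntegral.integral_Iic_sub_Iic hi.integrableOn hi.integrableOn]
    ring
  have h1 : HasDerivAt (fun y => (∫ t in Iic (0:ℝ), f t) + ∫ t in (0:ℝ)..y, f t) (f x) x := by
    refine HasDerivAt.const_add _ ?_
    exact intervalIntegral.integral_hasDerivAt_right (hc.intervalIntegrable _ _)
      (hc.stronglyMeasurableAtFilter _ _) hc.continuousAt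
  exact h1.congr_of_eventuallyEq (Eventually.of_forall key)

lemma tendsto_integral_Iic {f : ℝ → ℝ} (hi : Integrable f) :
    Tendsto (fun y => ∫ t in Iic y, f t) atTop (nhds (∫ t, f t)) := by
  have := tendsto_setIntegral_of_monotone (μ := volume) (f := f)
    (s := fun y : ℝ => Iic y) (fun y => measurableSet_Iic)
    (fun a b hab => Iic_subset_Iic.2 hab) (by rw [iUnion_Iic]; exact hi.integrableOn)
  simpa [iUnion_Iic] using this

lemma hasDerivAt_stdCdf (x : ℝ) : HasDerivAt stdCdf (stdPdf x) x :=
  hasDerivAt_integral_Iic continuous_stdPdf integrable_stdPdf x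

lemma continuous_stdCdf : Continuous stdCdf := by
  have : Differentiable ℝ stdCdf := fun x => (hasDerivAt_stdCdf x).differentiableAt
  exact this.continuous

lemma stdCdf_pos (x : ℝ) : 0 < stdCdf x := by
  refine (setIntegral_pos_iff_support_of_nonneg_ae
    (Eventually.of_forall fun t => (stdPdf_pos t).le) integrable_stdPdf.integrableOn).2 ?_
  have hs : (Function.support stdPdf) = univ := by
    ext t; simp [Function.mem_support, (stdPdf_pos t).ne']
  rw [hs, univ_inter]
  simp

lemma stdCdf_nonneg (x : ℝ) : 0 ≤ stdCdf x := (stdCdf_pos x).le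

lemma stdCdf_le_one (x : ℝ) : stdCdf x ≤ 1 := by
  rw [← integral_stdPdf]
  exact setIntegral_le_integral integrable_stdPdf (Eventually.of_forall fun t => (stdPdf_pos t).le)

lemma tendsto_stdCdf_atTop : Tendsto stdCdf atTop (nhds 1) := by
  have := tendsto_integral_Iic integrable_stdPdf
  rwa [integral_stdPdf] at this

lemma stdCdf_neg (x : ℝ) : stdCdf (-x) = 1 - stdCdf x := by
  have h1 : stdCdf x = ∫ t in Set.Ioi (-x), stdPdf t := by
    have := integral_comp_neg_Iic x stdPdf
    simp_rw [stdPdf_neg] at this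
    rw [stdCdf, this]
  have h2 : stdCdf (-x) + stdCdf x = 1 := by
    rw [stdCdf, h1, intervalIntegral.integral_Iic_add_Ioi integrable_stdPdf.integrableOn integrable_stdPdf.integrableOn,
      integral_stdPdf]
  linarith

lemma setIntegral_Iic_comp_add (f : ℝ → ℝ) (c a : ℝ) :
    ∫ u in Iic c, f (u + a) = ∫ s in Iic (c + a), f s := by
  rw [← integral_indicator measurableSet_Iic, ← integral_indicator measurableSet_Iic]
  rw [← integral_add_right_eq_self (fun x => (Iic (c+a)).indicator f x) a]
  congr 1 with u
  by_cases h : u ≤ c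
  · simp [indicator_of_mem, h, mem_Iic, add_le_add_iff_right, h]
  · simp [indicator_of_notMem, h, mem_Iic, add_le_add_iff_right]

lemma setIntegral_Iic_comp_mul (f : ℝ → ℝ) (a : ℝ) {b : ℝ} (hb : 0 < b) :
    ∫ x in Iic a, f (b * x) = b⁻¹ * ∫ x in Iic (b * a), f x := by
  rw [← integral_indicator measurableSet_Iic, ← integral_indicator measurableSet_Iic]
  have h1 : ∀ x : ℝ, (Iic a).indicator (fun x => f (b * x)) x
      = (Iic (b * a)).indicator f (b * x) := by
    intro x
    by_cases h : x ≤ a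
    · simp [indicator_of_mem, h, mem_Iic, mul_le_mul_iff_right₀ hb]
    · simp [indicator_of_notMem, h, mem_Iic, mul_le_mul_iff_right₀ hb]
  simp_rw [h1]
  rw [MeasureTheory.Measure.integral_comp_mul_left (fun x => (Iic (b*a)).indicator f x) b]
  rw [abs_of_pos (inv_pos.2 hb), smul_eq_mul]

lemma integral_stdPdf_affine {b : ℝ} (hb : 0 < b) (c : ℝ) :
    ∫ t, stdPdf (b * t + c) = b⁻¹ := by
  have h1 := MeasureTheory.Measure.integral_comp_mul_left (fun s => stdPdf (s + c)) b
  simp only [integral_add_right_eq_self stdPdf c, integral_stdPdf] at h1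
  simpa [abs_of_pos (inv_pos.2 hb)] using h1

lemma stdPdf_mul_eq (α : ℝ) (t u : ℝ) :
    stdPdf t * stdPdf (α*t + u)
      = stdPdf (u / Real.sqrt (1+α^2))
        * stdPdf (Real.sqrt (1+α^2) * t + α * u / Real.sqrt (1+α^2)) := by
  have hA0 : (0:ℝ) < Real.sqrt (1+α^2) := Real.sqrt_pos.2 (by positivity)
  have hA2 : (Real.sqrt (1+α^2))^2 = 1+α^2 := Real.sq_sqrt (by positivity)
  set A := Real.sqrt (1+α^2)
  unfold stdPdf
  rw [div_mul_div_comm, div_mul_div_comm, ← Real.exp_add, ← Real.exp_add]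
  congr 2
  have hne : A ≠ 0 := ne_of_gt hA0
  field_simp
  linear_combination (t^2*A^2 - u^2) * hA2

lemma integrable_prod_stdPdf (α : ℝ) :
    Integrable (fun p : ℝ × ℝ => stdPdf p.1 * stdPdf (α * p.1 + p.2))
      ((volume : Measure ℝ).prod (volume : Measure ℝ)) := by
  rw [MeasureTheory.integrable_prod_iff]
  · constructor
    · refine Eventually.of_forall fun x => ?_
      have : Integrable (fun y : ℝ => stdPdf (α * x + y)) := by
        have emb : MeasurableEmbedding (fun y : ℝ => α * x + y) :=
          (Homeomorph.addLeft (α * x)).measurableEmbedding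
        have mp : MeasurePreserving (fun y : ℝ => α * x + y) volume volume :=
          measurePreserving_add_left volume (α * x)
        exact (mp.integrable_comp_emb emb).2 integrable_stdPdf
      simpa using this.const_mul (stdPdf x)
    · have h : ∀ x : ℝ, (∫ y, ‖stdPdf x * stdPdf (α * x + y)‖) = stdPdf x := by
        intro x
        have h1 : ∀ y : ℝ, ‖stdPdf x * stdPdf (α * x + y)‖ = stdPdf x * stdPdf (α * x + y) := by
          intro y
          exact abs_of_nonneg (mul_nonneg (stdPdf_pos x).le (stdPdf_pos _).le)
        simp_rw [h1]
        rw [integral_const_mul, integral_add_left_eq_self stdPdf (α*x), integral_stdPdf, mul_one]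
      simp_rw [h]
      exact integrable_stdPdf
  · exact (continuous_stdPdf.comp continuous_fst |>.mul
      (continuous_stdPdf.comp (by fun_prop))).aestronglyMeasurable

lemma key_identity (α τ : ℝ) :
    ∫ t, stdPdf t * stdCdf (α * t + τ) = stdCdf (τ / Real.sqrt (1+α^2)) := by
  have hA0 : (0:ℝ) < Real.sqrt (1+α^2) := Real.sqrt_pos.2 (by positivity)
  set A := Real.sqrt (1+α^2) with hA
  have step1 : ∀ t : ℝ, stdPdf t * stdCdf (α * t + τ)
      = ∫ u in Iic τ, stdPdf t * stdPdf (α * t + u) := by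
    intro t
    rw [stdCdf, ← integral_const_mul, show α*t+τ = τ + α*t from add_comm _ _,
      ← setIntegral_Iic_comp_add (fun s => stdPdf t * stdPdf s) τ (α*t)]
    congr 1
    funext u
    rw [add_comm u (α*t)]
  have hint : Integrable (Function.uncurry fun t u => stdPdf t * stdPdf (α * t + u))
      ((volume : Measure ℝ).prod ((volume : Measure ℝ).restrict (Iic τ))) := by
    have h1 : (volume : Measure ℝ).prod ((volume : Measure ℝ).restrict (Iic τ))
        = ((volume : Measure ℝ).prod (volume : Measure ℝ)).restrict (univ ×ˢ Iic τ) := by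
      rw [← Measure.prod_restrict, Measure.restrict_univ]
    rw [h1]
    exact (integrable_prod_stdPdf α).integrableOn
  have swap := MeasureTheory.integral_integral_swap hint
  simp_rw [step1]
  rw [swap]
  have inner : ∀ u : ℝ, ∫ t, stdPdf t * stdPdf (α * t + u) = stdPdf (u / A) * A⁻¹ := by
    intro u
    simp_rw [fun t => stdPdf_mul_eq α t u]
    rw [integral_const_mul, integral_stdPdf_affine hA0 (α * u / A)]
  simp_rw [inner]
  rw [integral_mul_const]
  have h2 : ∀ u : ℝ, stdPdf (u / A) = stdPdf (A⁻¹ * u) := by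
    intro u; rw [div_eq_inv_mul]
  simp_rw [h2]
  rw [setIntegral_Iic_comp_mul stdPdf τ (inv_pos.2 hA0), inv_inv]
  rw [stdCdf]
  have : A⁻¹ * τ = τ / A := by rw [div_eq_inv_mul]
  rw [this]
  field_simp

lemma hasDerivAt_stdPdf (y : ℝ) : HasDerivAt stdPdf (-y * stdPdf y) y := by
  have h1 : HasDerivAt (fun y : ℝ => -y^2/2) (-y) y := by
    have := (hasDerivAt_pow 2 y).neg.div_const 2
    simpa using this.congr_deriv (by ring)
  have h2 := (h1.exp).div_const (Real.sqrt (2*Real.pi))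
  have h3 : Real.exp (-y^2/2) * (-y) / Real.sqrt (2*Real.pi) = -y * stdPdf y := by
    unfold stdPdf; ring
  rw [h3] at h2
  exact h2

lemma tendsto_stdPdf_atTop : Tendsto stdPdf atTop (nhds 0) := by
  have h1 : Tendsto (fun y : ℝ => -y^2/2) atTop atBot := by
    have : Tendsto (fun y : ℝ => y^2) atTop atTop := tendsto_pow_atTop (by norm_num)
    have h2 := tendsto_neg_atBot_iff.2 (this.atTop_div_const (by norm_num : (0:ℝ) < 2))
    have : (fun y : ℝ => -y^2/2) = fun y : ℝ => -(y^2/2) := by funext y; ring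
    rwa [this]
  have := (Real.tendsto_exp_atBot).comp h1
  have h4 := this.div_const (Real.sqrt (2*Real.pi))
  have : stdPdf = fun y => Real.exp (-y^2/2) / Real.sqrt (2*Real.pi) := rfl
  rw [this]
  simpa [Function.comp] using h4

lemma mills : Tendsto (fun y : ℝ => (1 - stdCdf y) * y / stdPdf y) atTop (nhds 1) := by
  have key : Tendsto (fun y : ℝ => (1 - stdCdf y) / (stdPdf y / y)) atTop (nhds 1) := by
    apply HasDerivAt.lhopital_zero_atTop
      (f' := fun y => -stdPdf y) (g' := fun y => -stdPdf y * (y^2+1)/y^2)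
    · exact Eventually.of_forall fun y => (hasDerivAt_stdCdf y).const_sub 1
    · filter_upwards [eventually_gt_atTop (0:ℝ)] with y hy
      have := (hasDerivAt_stdPdf y).div (hasDerivAt_id y) (ne_of_gt hy)
      refine this.congr_deriv ?_
      simp only [id]
      field_simp
      ring
    · filter_upwards [eventually_gt_atTop (0:ℝ)] with y hy
      have h1 : 0 < stdPdf y * (y^2+1)/y^2 := by
        have := stdPdf_pos y
        positivity
      intro h
      rw [show -stdPdf y * (y^2+1)/y^2 = -(stdPdf y * (y^2+1)/y^2) by ring] at h
      rw [neg_eq_zero] at h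
      exact h1.ne' h
    · have h5 : Tendsto (fun y => (1:ℝ) - stdCdf y) atTop (nhds (1-1)) :=
        (tendsto_const_nhds (x := (1:ℝ))).sub tendsto_stdCdf_atTop
      simpa using h5
    · have := tendsto_stdPdf_atTop.mul tendsto_inv_atTop_zero
      simpa [div_eq_mul_inv] using this
    · have heq : ∀ᶠ y : ℝ in atTop,
          -stdPdf y / (-stdPdf y * (y^2+1)/y^2) = (1 + (y⁻¹)^2)⁻¹ := by
        filter_upwards [eventually_gt_atTop (0:ℝ)] with y hy
        have h1 : stdPdf y ≠ 0 := (stdPdf_pos y).ne'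
        have h2 : y ≠ 0 := ne_of_gt hy
        field_simp
      rw [tendsto_congr' heq]
      have : Tendsto (fun y : ℝ => 1 + (y⁻¹)^2) atTop (nhds 1) := by
        have := (tendsto_inv_atTop_zero (𝕜 := ℝ)).pow 2
        simpa using tendsto_const_nhds.add this
      simpa using this.inv₀ (by norm_num)
  apply key.congr
  intro y
  rw [div_div_eq_mul_div]

noncomputable def esnF (α τ t : ℝ) : ℝ := stdPdf t * stdCdf (α*t+τ)
noncomputable def esnH (α τ x : ℝ) : ℝ := (1+α^2)*x + α*τ
noncomputable def esnM (α τ x : ℝ) : ℝ := stdPdf (α*x+τ) / stdCdf (α*x+τ)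
noncomputable def esnD (α τ x : ℝ) : ℝ :=
  x * esnH α τ x + (1+α^2) - α * esnM α τ x * esnH α τ x

lemma esnF_pos (α τ t : ℝ) : 0 < esnF α τ t := mul_pos (stdPdf_pos t) (stdCdf_pos _)

lemma continuous_esnF (α τ : ℝ) : Continuous (esnF α τ) := by
  unfold esnF
  exact continuous_stdPdf.mul (continuous_stdCdf.comp (by fun_prop))

lemma integrable_esnF (α τ : ℝ) : Integrable (esnF α τ) := by
  refine integrable_stdPdf.mono (continuous_esnF α τ).aestronglyMeasurable ?_
  refine Eventually.of_forall fun t => ?_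
  rw [Real.norm_eq_abs, Real.norm_eq_abs, abs_of_pos (esnF_pos α τ t),
    abs_of_pos (stdPdf_pos t)]
  exact mul_le_of_le_one_right (stdPdf_pos t).le (stdCdf_le_one _)

lemma tendsto_esnF (α τ : ℝ) : Tendsto (esnF α τ) atTop (nhds 0) := by
  refine squeeze_zero (fun t => (esnF_pos α τ t).le) (fun t => ?_) tendsto_stdPdf_atTop
  exact mul_le_of_le_one_right (stdPdf_pos t).le (stdCdf_le_one _)

lemma tendsto_esnH (α τ : ℝ) : Tendsto (esnH α τ) atTop atTop := by
  unfold esnH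
  exact tendsto_atTop_add_const_right _ _ (Tendsto.const_mul_atTop (by positivity) tendsto_id)

lemma hasDerivAt_affine (α τ x : ℝ) : HasDerivAt (fun x => α*x+τ) α x := by
  simpa using ((hasDerivAt_id x).const_mul α).add_const τ

lemma hasDerivAt_esnF (α τ x : ℝ) :
    HasDerivAt (esnF α τ) (-x * esnF α τ x + α * stdPdf x * stdPdf (α*x+τ)) x := by
  have hcomp : HasDerivAt (fun x => stdCdf (α*x+τ)) (stdPdf (α*x+τ) * α) x :=
    by have := (hasDerivAt_stdCdf (α*x+τ)).comp x (hasDerivAt_affine α τ x); exact this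
  have := (hasDerivAt_stdPdf x).mul hcomp
  refine this.congr_deriv ?_
  unfold esnF
  ring

lemma hasDerivAt_esnH (α τ x : ℝ) : HasDerivAt (esnH α τ) (1+α^2) x := by
  unfold esnH
  simpa using ((hasDerivAt_id x).const_mul (1+α^2)).add_const (α*τ)

lemma tendsto_linear_div_esnH (α τ p q : ℝ) :
    Tendsto (fun x => (p * x + q) / esnH α τ x) atTop (nhds (p / (1+α^2))) := by
  have ha0 : (0:ℝ) < 1 + α^2 := by positivity
  have heq : ∀ᶠ x : ℝ in atTop,
      (p * x + q) / esnH α τ x = (p + q/x)/((1+α^2) + (α*τ)/x) := by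
    filter_upwards [eventually_gt_atTop (0:ℝ)] with x hx
    have hx0 : x ≠ 0 := ne_of_gt hx
    unfold esnH
    rw [show p + q/x = (p*x + q)/x by field_simp,
      show (1+α^2) + (α*τ)/x = ((1+α^2)*x + α*τ)/x by field_simp]
    rw [div_div_div_cancel_right₀]
    exact hx0
  rw [tendsto_congr' heq]
  have h0 : ∀ r : ℝ, Tendsto (fun x : ℝ => r / x) atTop (nhds 0) := fun r =>
    tendsto_const_nhds.div_atTop tendsto_id
  have hnum : Tendsto (fun x : ℝ => p + q/x) atTop (nhds p) := by
    simpa using tendsto_const_nhds.add (h0 q)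
  have hden : Tendsto (fun x : ℝ => (1+α^2) + (α*τ)/x) atTop (nhds (1+α^2)) := by
    simpa using tendsto_const_nhds.add (h0 (α*τ))
  exact hnum.div hden (ne_of_gt ha0)

lemma tendsto_esnD_div_sq (α : ℝ) (hα : α ≤ 0) (τ : ℝ) :
    Tendsto (fun x => esnD α τ x / (esnH α τ x)^2) atTop (nhds 1) := by
  have ha0 : (0:ℝ) < 1 + α^2 := by positivity
  have hL1 : Tendsto (fun x => x / esnH α τ x) atTop (nhds (1+α^2)⁻¹) := by
    have := tendsto_linear_div_esnH α τ 1 0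
    simpa [one_div] using this
  have hL2 : Tendsto (fun x => (1+α^2) / (esnH α τ x)^2) atTop (nhds 0) := by
    refine tendsto_const_nhds.div_atTop ?_
    have := (tendsto_esnH α τ).atTop_mul_atTop₀ (tendsto_esnH α τ)
    simpa [sq] using this
  have hL3 : Tendsto (fun x => α * esnM α τ x / esnH α τ x) atTop
      (nhds (-(α^2) / (1+α^2))) := by
    rcases hα.lt_or_eq with hneg | heq0
    · -- α < 0
      have hytop : Tendsto (fun x : ℝ => -(α*x+τ)) atTop atTop := by
        have : Tendsto (fun x : ℝ => (-α)*x + (-τ)) atTop atTop :=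
          tendsto_atTop_add_const_right _ _
            (Tendsto.const_mul_atTop (by linarith) tendsto_id)
        refine this.congr fun x => by ring
      have hM : Tendsto
          (fun x => stdCdf (α*x+τ) * (-(α*x+τ)) / stdPdf (α*x+τ)) atTop (nhds 1) := by
        have := mills.comp hytop
        refine this.congr fun x => ?_
        simp only [Function.comp]
        rw [← stdCdf_neg (-(α*x+τ)), neg_neg, ← stdPdf_neg (-(α*x+τ)), neg_neg]
      have hw : Tendsto (fun x => α * ((-(α*x+τ)) / esnH α τ x)) atTop
          (nhds (α * (-α/(1+α^2)))) := by
        have := tendsto_linear_div_esnH α τ (-α) (-τ)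
        have h2 : Tendsto (fun x => (-(α*x+τ)) / esnH α τ x) atTop (nhds (-α/(1+α^2))) := by
          refine this.congr fun x => by ring_nf
        exact h2.const_mul α
      have heq : ∀ᶠ x : ℝ in atTop,
          α * ((-(α*x+τ)) / esnH α τ x) /
            (stdCdf (α*x+τ) * (-(α*x+τ)) / stdPdf (α*x+τ))
          = α * esnM α τ x / esnH α τ x := by
        filter_upwards [hytop.eventually_gt_atTop 0,
          (tendsto_esnH α τ).eventually_gt_atTop 0] with x hx hH
        have h1 : stdPdf (α*x+τ) ≠ 0 := (stdPdf_pos _).ne'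
        have h2 : stdCdf (α*x+τ) ≠ 0 := (stdCdf_pos _).ne'
        have h3 : -(α*x+τ) ≠ 0 := ne_of_gt hx
        have key : ∀ (a w H p q : ℝ), w ≠ 0 → q ≠ 0 → H ≠ 0 → p ≠ 0 →
            a * (w/H) / (q*w/p) = a*(p/q)/H := by
          intros a w H p q hw hq hH hp
          field_simp
        unfold esnM
        exact key α (-(α*x+τ)) (esnH α τ x) (stdPdf (α*x+τ)) (stdCdf (α*x+τ))
          h3 h2 (ne_of_gt hH) h1
      have hval : α * (-α/(1+α^2)) / 1 = -(α^2) / (1+α^2) := by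
        field_simp
      rw [← hval]
      exact Tendsto.congr' heq (hw.div hM one_ne_zero)
    · -- α = 0
      subst heq0
      simpa using (tendsto_const_nhds : Tendsto (fun _ : ℝ => (0:ℝ)) atTop _)
  have heq : ∀ᶠ x : ℝ in atTop,
      x / esnH α τ x + (1+α^2) / (esnH α τ x)^2 - α * esnM α τ x / esnH α τ x
        = esnD α τ x / (esnH α τ x)^2 := by
    filter_upwards [(tendsto_esnH α τ).eventually_gt_atTop 0] with x hx
    have hne : esnH α τ x ≠ 0 := ne_of_gt hx
    unfold esnD
    field_simp
  have := (hL1.add hL2).sub hL3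
  rw [tendsto_congr' heq] at this
  convert this using 2
  field_simp
  ring


/-- univariate extended skew-normal cdf Φ_{α,τ} -/
noncomputable def esnCdf (α τ x : ℝ) : ℝ :=
  ∫ t in Set.Iic x, stdPdf t * stdCdf (α*t+τ) / stdCdf (τ / Real.sqrt (1+α^2))

/-- Tail asymptotics of the univariate extended skew-normal survival function
for α ≤ 0: 1 − Φ_{α,τ}(x) ∼ φ(x)Φ(αx+τ)/(Φ(τ/ᾱ)(ᾱ²x+ατ)). -/
theorem esn1_survival_asymptotics_nonpos
    (α : ℝ) (hα : α ≤ 0) (τ : ℝ) :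
    Tendsto (fun x : ℝ =>
        (1 - esnCdf α τ x) *
          (stdCdf (τ / Real.sqrt (1+α^2)) * ((Real.sqrt (1+α^2))^2 * x + α*τ)) /
          (stdPdf x * stdCdf (α*x + τ)))
      atTop (nhds 1) := by
  have ha0 : (0:ℝ) < 1 + α^2 := by positivity
  have hA2 : (Real.sqrt (1+α^2))^2 = 1+α^2 := Real.sq_sqrt ha0.le
  set c : ℝ := stdCdf (τ / Real.sqrt (1+α^2)) with hc_def
  have hc : 0 < c := stdCdf_pos _
  set T : ℝ → ℝ := fun x => c - ∫ t in Iic x, esnF α τ t with hT_def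
  have hT' : ∀ x, HasDerivAt T (-(esnF α τ x)) x := fun x => by
    simpa using
      (hasDerivAt_integral_Iic (continuous_esnF α τ) (integrable_esnF α τ) x).const_sub c
  have hG' : ∀ᶠ x in atTop, HasDerivAt (fun x => esnF α τ x / esnH α τ x)
      (-esnF α τ x * esnD α τ x / (esnH α τ x)^2) x := by
    filter_upwards [(tendsto_esnH α τ).eventually_gt_atTop 0] with x hx
    have hdiv := (hasDerivAt_esnF α τ x).div (hasDerivAt_esnH α τ x) (ne_of_gt hx)
    refine hdiv.congr_deriv ?_
    have hq : stdCdf (α*x+τ) ≠ 0 := (stdCdf_pos _).ne'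
    have hq2 : stdCdf (x*α+τ) ≠ 0 := (stdCdf_pos _).ne'
    unfold esnD esnM esnF
    field_simp
    ring
  have hD := tendsto_esnD_div_sq α hα τ
  have hD_ne : ∀ᶠ x in atTop, esnD α τ x ≠ 0 := by
    have h1 := hD.eventually (eventually_gt_nhds (by norm_num : (0:ℝ) < 1))
    filter_upwards [h1] with x h1x h0
    rw [h0, zero_div] at h1x
    exact lt_irrefl _ h1x
  have hg'_ne : ∀ᶠ x in atTop, -esnF α τ x * esnD α τ x / (esnH α τ x)^2 ≠ 0 := by
    filter_upwards [hD_ne, (tendsto_esnH α τ).eventually_gt_atTop 0] with x h1 h2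
    exact div_ne_zero (mul_ne_zero (neg_ne_zero.2 (esnF_pos α τ x).ne') h1)
      (pow_ne_zero _ (ne_of_gt h2))
  have hT0 : Tendsto T atTop (nhds 0) := by
    have hkey : ∫ t, esnF α τ t = c := key_identity α τ
    have h1 := tendsto_integral_Iic (integrable_esnF α τ)
    rw [hkey] at h1
    have h2 := (tendsto_const_nhds (x := c) (f := atTop (α := ℝ))).sub h1
    simpa [hT_def] using h2
  have hg0 : Tendsto (fun x => esnF α τ x / esnH α τ x) atTop (nhds 0) := by
    have h1 := (tendsto_esnF α τ).mul (tendsto_esnH α τ).inv_tendsto_atTop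
    simpa [div_eq_mul_inv] using h1
  have hratio : Tendsto
      (fun x => -(esnF α τ x) / (-esnF α τ x * esnD α τ x / (esnH α τ x)^2))
      atTop (nhds 1) := by
    have heq : ∀ᶠ x in atTop, ((esnD α τ x) / (esnH α τ x)^2)⁻¹
        = -(esnF α τ x) / (-esnF α τ x * esnD α τ x / (esnH α τ x)^2) := by
      filter_upwards [hD_ne] with x h1
      have hf : -(esnF α τ x) ≠ 0 := neg_ne_zero.2 (esnF_pos α τ x).ne'
      rw [show -esnF α τ x * esnD α τ x = -(esnF α τ x) * esnD α τ x by ring,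
        div_div_eq_mul_div, mul_comm (-(esnF α τ x)) ((esnH α τ x)^2), mul_div_assoc,
        div_mul_cancel_left₀ hf, inv_div, div_eq_mul_inv]
    exact Tendsto.congr' heq (by simpa using hD.inv₀ one_ne_zero)
  have hmain : Tendsto (fun x => T x / (esnF α τ x / esnH α τ x)) atTop (nhds 1) :=
    HasDerivAt.lhopital_zero_atTop (Eventually.of_forall hT') hG' hg'_ne hT0 hg0 hratio
  have hesn : ∀ x, 1 - esnCdf α τ x = T x / c := by
    intro x
    have h1 : esnCdf α τ x = (∫ t in Iic x, esnF α τ t) / c := by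
      unfold esnCdf esnF
      rw [← hc_def, integral_div]
    rw [h1]
    simp only [hT_def]
    field_simp
  have hfinal : ∀ x, (1 - esnCdf α τ x) * (c * ((Real.sqrt (1+α^2))^2 * x + α*τ)) /
      (stdPdf x * stdCdf (α*x + τ)) = T x / (esnF α τ x / esnH α τ x) := by
    intro x
    rw [hesn x, hA2, div_div_eq_mul_div]
    have hf : stdPdf x * stdCdf (α*x+τ) ≠ 0 :=
      (mul_pos (stdPdf_pos x) (stdCdf_pos (α*x+τ))).ne'
    unfold esnH esnF
    field_simp
  exact hmain.congr fun x => (hfinal x).symm
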